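/- arXiv:1507.03535 — 7 statements merged into one kernel-verified Lean document; each statement's English description precedes it below -/
import Mathlib

section
/- Let K be a field equipped with a nonarchimedean absolute value |·|, and let λ₁, λ₂, λ₃ ∈ K, each different from 1, satisfy the fixed-point residue formula. Then it is not the case that all three are repelling, i.e., one cannot have |λ₁| > 1, |λ₂| > 1, and |λ₃| > 1 simultaneously. -/
/-!
If `|λ| > 1` then `|1 - λ| = |λ|` by the ultrametric inequality, so every term `1 / (1 - λᵢ)` of
the residue formula has absolute value `< 1`; so does their sum, which is impossible since it is `1`.
-/

namespace IsNonarchimedean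

variable {K : Type*} [DivisionRing K] {v : AbsoluteValue K ℝ}

lemma apply_one_sub_eq_of_one_lt (hna : IsNonarchimedean v) {x : K} (hx : 1 < v x) :
    v (1 - x) = v x := by
  rw [sub_eq_add_neg, hna.add_eq_right_of_lt (by rwa [map_one, map_neg_eq_map]), map_neg_eq_map]

lemma apply_one_div_one_sub_lt_one (hna : IsNonarchimedean v) {x : K} (hx : 1 < v x) :
    v (1 / (1 - x)) < 1 := by
  rw [one_div, map_inv₀, hna.apply_one_sub_eq_of_one_lt hx]
  exact inv_lt_one_of_one_lt₀ hx

end IsNonarchimedean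

theorem stmt_1_general {K : Type*} [Field K] (v : AbsoluteValue K ℝ) (hna : IsNonarchimedean v)
    (l1 l2 l3 : K)
    (hres : 1 / (1 - l1) + 1 / (1 - l2) + 1 / (1 - l3) = 1) :
    ¬(1 < v l1 ∧ 1 < v l2 ∧ 1 < v l3) := by
  rintro ⟨hl1, hl2, hl3⟩
  have hsum : v (1 / (1 - l1) + 1 / (1 - l2) + 1 / (1 - l3)) < 1 :=
    (hna _ _).trans_lt <| max_lt
      ((hna _ _).trans_lt <| max_lt (hna.apply_one_div_one_sub_lt_one hl1)
        (hna.apply_one_div_one_sub_lt_one hl2))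
      (hna.apply_one_div_one_sub_lt_one hl3)
  rw [hres, map_one] at hsum
  exact hsum.false

/-- If `λ₁, λ₂, λ₃` in a nonarchimedean valued field `K`, each different from `1`,
satisfy the fixed-point residue formula, then they cannot all be repelling. -/
theorem stmt_1 {K : Type*} [Field K] (v : AbsoluteValue K ℝ) (hna : IsNonarchimedean v)
    (l1 l2 l3 : K) (h1 : l1 ≠ 1) (h2 : l2 ≠ 1) (h3 : l3 ≠ 1)
    (hres : 1 / (1 - l1) + 1 / (1 - l2) + 1 / (1 - l3) = 1) :
    ¬(1 < v l1 ∧ 1 < v l2 ∧ 1 < v l3) :=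
  stmt_1_general v hna l1 l2 l3 hres
end

section
/- Let K be a field equipped with a nonarchimedean absolute value |·|, and let λ₁, λ₂, λ₃ ∈ K, each different from 1, satisfy the fixed-point residue formula. If |λ₁| > 1 and |λ₂| > 1, then |λ₃| < 1. (If a quadratic rational map has two repelling classical fixed points, the third fixed point is attracting.) -/
/-! For `|λ| > 1` the strong triangle inequality gives `|1 - λ| = |λ|`, so the first two residues
`1/(1 - λ₁)`, `1/(1 - λ₂)` lie in the open unit disc, and by the residue formula so does
`1 - 1/(1 - λ₃)`. The open disc of radius `1` around `1` is stable under `x ↦ x⁻¹`, hence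
`1 - λ₃` lies in it too, i.e. `|λ₃| < 1`. -/

namespace IsNonarchimedean

section Ring

variable {R : Type*} [Ring R] [Nontrivial R] {v : AbsoluteValue R ℝ} {x : R}

lemma apply_one_sub_of_one_lt (hna : IsNonarchimedean v) (hx : 1 < v x) : v (1 - x) = v x := by
  rw [sub_eq_add_neg, hna.add_eq_right_of_lt (by rwa [v.map_one, v.map_neg]), v.map_neg]

lemma apply_one_sub_of_lt_one (hna : IsNonarchimedean v) (hx : v x < 1) : v (1 - x) = 1 := by
  rw [sub_eq_add_neg, hna.add_eq_left_of_lt (by rwa [v.map_one, v.map_neg]), v.map_one]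

end Ring

section DivisionRing

variable {K : Type*} [DivisionRing K] {v : AbsoluteValue K ℝ} {x : K}

lemma apply_inv_one_sub_lt_one (hna : IsNonarchimedean v) (hx : 1 < v x) : v (1 - x)⁻¹ < 1 := by
  rw [map_inv₀, hna.apply_one_sub_of_one_lt hx]
  exact inv_lt_one_of_one_lt₀ hx

lemma apply_one_sub_lt_one_of_inv (hna : IsNonarchimedean v) (hx : v (1 - x⁻¹) < 1) :
    v (1 - x) < 1 := by
  have hx_one : v x = 1 := by simpa using hna.apply_one_sub_of_lt_one hx
  have hx0 : x ≠ 0 := by rintro rfl; simp at hx_one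
  calc v (1 - x) = v (-(1 - x⁻¹) * x) := by
        rw [neg_mul, sub_mul, one_mul, inv_mul_cancel₀ hx0, neg_sub]
    _ = v (1 - x⁻¹) := by rw [v.map_mul, v.map_neg, hx_one, mul_one]
    _ < 1 := hx

end DivisionRing

end IsNonarchimedean

theorem stmt_2_general {K : Type*} [Field K] (v : AbsoluteValue K ℝ) (hna : IsNonarchimedean v)
    (l1 l2 l3 : K)
    (hres : 1 / (1 - l1) + 1 / (1 - l2) + 1 / (1 - l3) = 1)
    (hr1 : 1 < v l1) (hr2 : 1 < v l2) :
    v l3 < 1 := by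
  have hsum : 1 - (1 - l3)⁻¹ = (1 - l1)⁻¹ + (1 - l2)⁻¹ := by
    simp only [one_div] at hres
    linear_combination -hres
  have hdisc : v (1 - (1 - l3)⁻¹) < 1 := hsum ▸ (hna _ _).trans_lt
    (max_lt (hna.apply_inv_one_sub_lt_one hr1) (hna.apply_inv_one_sub_lt_one hr2))
  simpa using hna.apply_one_sub_lt_one_of_inv hdisc

/-- If `λ₁, λ₂, λ₃` in a nonarchimedean valued field `K`, each different from `1`,
satisfy the fixed-point residue formula, and `|λ₁| > 1` and `|λ₂| > 1`, then `|λ₃| < 1`. -/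
theorem stmt_2 {K : Type*} [Field K] (v : AbsoluteValue K ℝ) (hna : IsNonarchimedean v)
    (l1 l2 l3 : K) (h1 : l1 ≠ 1) (h2 : l2 ≠ 1) (h3 : l3 ≠ 1)
    (hres : 1 / (1 - l1) + 1 / (1 - l2) + 1 / (1 - l3) = 1)
    (hr1 : 1 < v l1) (hr2 : 1 < v l2) :
    v l3 < 1 :=
  stmt_2_general v hna l1 l2 l3 hres hr1 hr2
end

section
/- Let K be a field equipped with a nonarchimedean absolute value |·|, and let λ₁, λ₂, λ₃ ∈ K, each different from 1, satisfy the fixed-point residue formula. If |λ₁| > 1, |λ₂| ≤ 1, and |λ₃| ≤ 1, then |λ₂| = 1 and |λ₃| = 1. (If a quadratic rational map has exactly one repelling classical fixed point, then the other two fixed points are indifferent.) -/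
/-!
Clearing denominators, the residue formula becomes `λ₁ (1 - λ₂λ₃) = (1 - λ₂) + (1 - λ₃)`.
The right side has absolute value at most `1` by the ultrametric inequality, so
`|1 - λ₂λ₃| < 1` because `|λ₁| > 1`. In a nonarchimedean field this forces `|λ₂λ₃| = 1`,
and two factors of absolute value at most `1` with product of absolute value `1` both have
absolute value `1`.
-/

theorem mul_one_sub_mul_eq_of_residue_formula {K : Type*} [Field K] {l1 l2 l3 : K}
    (h1 : l1 ≠ 1) (h2 : l2 ≠ 1) (h3 : l3 ≠ 1)
    (hres : 1 / (1 - l1) + 1 / (1 - l2) + 1 / (1 - l3) = 1) :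
    l1 * (1 - l2 * l3) = (1 - l2) + (1 - l3) := by
  have n1 : (1 : K) - l1 ≠ 0 := sub_ne_zero.mpr h1.symm
  have n2 : (1 : K) - l2 ≠ 0 := sub_ne_zero.mpr h2.symm
  have n3 : (1 : K) - l3 ≠ 0 := sub_ne_zero.mpr h3.symm
  field_simp at hres
  linear_combination -hres

namespace IsNonarchimedean

variable {R S : Type*} [Ring R] [IsDomain R] [Field S] [LinearOrder S] [IsStrictOrderedRing S]
  {v : AbsoluteValue R S}

theorem apply_one_sub_le_one (hna : IsNonarchimedean v) {x : R} (hx : v x ≤ 1) :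
    v (1 - x) ≤ 1 := by
  calc v (1 - x) = v (1 + -x) := by rw [sub_eq_add_neg]
    _ ≤ max (v 1) (v (-x)) := hna 1 (-x)
    _ ≤ 1 := by rw [v.map_one, v.map_neg]; exact max_le le_rfl hx

theorem apply_eq_one_of_apply_one_sub_lt_one (hna : IsNonarchimedean v) {x : R}
    (hx : v (1 - x) < 1) : v x = 1 := by
  have hlt : v (-(1 - x)) < v 1 := by rwa [v.map_neg, v.map_one]
  calc v x = v (1 + -(1 - x)) := by rw [neg_sub, add_sub_cancel]
    _ = v 1 := add_eq_left_of_lt hna hlt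
    _ = 1 := v.map_one

end IsNonarchimedean

/-- If `λ₁, λ₂, λ₃` in a nonarchimedean valued field `K`, each different from `1`,
satisfy the fixed-point residue formula, and `|λ₁| > 1`, `|λ₂| ≤ 1`, `|λ₃| ≤ 1`, then
`|λ₂| = 1` and `|λ₃| = 1`. -/
theorem stmt_3 {K : Type*} [Field K] (v : AbsoluteValue K ℝ) (hna : IsNonarchimedean v)
    (l1 l2 l3 : K) (h1 : l1 ≠ 1) (h2 : l2 ≠ 1) (h3 : l3 ≠ 1)
    (hres : 1 / (1 - l1) + 1 / (1 - l2) + 1 / (1 - l3) = 1)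
    (hr1 : 1 < v l1) (hr2 : v l2 ≤ 1) (hr3 : v l3 ≤ 1) :
    v l2 = 1 ∧ v l3 = 1 := by
  have hprod : v l1 * v (1 - l2 * l3) ≤ 1 := by
    rw [← v.map_mul, mul_one_sub_mul_eq_of_residue_formula h1 h2 h3 hres]
    exact (hna _ _).trans (max_le (hna.apply_one_sub_le_one hr2) (hna.apply_one_sub_le_one hr3))
  have hsmall : v (1 - l2 * l3) < 1 := by
    by_contra! h
    linarith [le_mul_of_one_le_right (zero_le_one.trans hr1.le) h]
  have hunit : v l2 * v l3 = 1 := by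
    rw [← v.map_mul]; exact hna.apply_eq_one_of_apply_one_sub_lt_one hsmall
  constructor
  · exact le_antisymm hr2 (hunit ▸ mul_le_of_le_one_right (v.nonneg _) hr3)
  · exact le_antisymm hr3 (hunit ▸ mul_le_of_le_one_left (v.nonneg _) hr2)
end

section
/- Let K be a field equipped with a nonarchimedean absolute value |·|, and let λ₁, λ₂, λ₃ ∈ K, each different from 1, satisfy the fixed-point residue formula. Suppose |λ₁| ≤ 1, |λ₂| ≤ 1, |λ₃| ≤ 1, and suppose all pairwise products reduce to 1 modulo the maximal ideal, i.e., |λ₁λ₂ − 1| < 1, |λ₁λ₃ − 1| < 1, and |λ₂λ₃ − 1| < 1. Then |λ₁ − 1| < 1, |λ₂ − 1| < 1, and |λ₃ − 1| < 1, i.e., all three multipliers reduce to 1 modulo the maximal ideal. -/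
/-!
Reduce modulo the maximal ideal of the valuation ring `{x | v x ≤ 1}`. There the reductions
`a, b, c` of the multipliers satisfy `ab = ac = bc = 1`, hence `a = b = c` and `a² = 1`, and the
residue formula with denominators cleared becomes `3(1 - a)² = (1 - a)³`. Together these force
`(1 - a)² = 0`, so `a = 1`.
-/

open scoped NNReal

theorem eq_one_of_pairwise_mul_eq_one_of_residue_formula {R : Type*} [CommRing R] [IsReduced R]
    {a b c : R} (hab : a * b = 1) (hac : a * c = 1) (hbc : b * c = 1)
    (hres : (1 - b) * (1 - c) + (1 - a) * (1 - c) + (1 - a) * (1 - b) =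
      (1 - a) * (1 - b) * (1 - c)) :
    a = 1 ∧ b = 1 ∧ c = 1 := by
  obtain rfl : b = a := by linear_combination a * hbc - b * hac
  obtain rfl : c = b := by linear_combination b * hbc - c * hab
  have hsq : (1 - c) ^ 2 = 0 := by linear_combination hres + (1 - c) * hab
  have hc : c = 1 := (sub_eq_zero.mp (IsReduced.eq_zero _ ⟨2, hsq⟩)).symm
  exact ⟨hc, hc, hc⟩

theorem mul_form_of_residue_formula {K : Type*} [Field K] {a b c : K} (ha : a ≠ 1) (hb : b ≠ 1)
    (hc : c ≠ 1) (h : 1 / (1 - a) + 1 / (1 - b) + 1 / (1 - c) = 1) :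
    (1 - b) * (1 - c) + (1 - a) * (1 - c) + (1 - a) * (1 - b) =
      (1 - a) * (1 - b) * (1 - c) := by
  have := sub_ne_zero.mpr ha.symm
  have := sub_ne_zero.mpr hb.symm
  have := sub_ne_zero.mpr hc.symm
  field_simp at h
  linear_combination h

namespace AbsoluteValue

variable {K : Type*} [Field K] (v : AbsoluteValue K ℝ) (hna : IsNonarchimedean v)

noncomputable def toValuation : Valuation K ℝ≥0 where
  toFun x := ⟨v x, v.nonneg x⟩
  map_zero' := Subtype.ext v.map_zero
  map_one' := Subtype.ext v.map_one
  map_mul' x y := Subtype.ext (v.map_mul x y)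
  map_add_le_max' := hna

theorem residue_eq_one_iff {x : (v.toValuation hna).valuationSubring} :
    IsLocalRing.residue _ x = 1 ↔ v (x - 1) < 1 := by
  rw [← sub_eq_zero, ← map_one (IsLocalRing.residue _), ← map_sub,
    IsLocalRing.residue_eq_zero_iff, Valuation.mem_maximalIdeal_iff]
  rfl

end AbsoluteValue

/-- If `λ₁, λ₂, λ₃` in a nonarchimedean valued field `K`, each different from `1`,
satisfy the fixed-point residue formula, all have absolute value at most `1`, and all pairwise
products reduce to `1` modulo the maximal ideal, then all three multipliers reduce to `1`. -/
theorem stmt_4 {K : Type*} [Field K] (v : AbsoluteValue K ℝ) (hna : IsNonarchimedean v)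
    (l1 l2 l3 : K) (h1 : l1 ≠ 1) (h2 : l2 ≠ 1) (h3 : l3 ≠ 1)
    (hres : 1 / (1 - l1) + 1 / (1 - l2) + 1 / (1 - l3) = 1)
    (hb1 : v l1 ≤ 1) (hb2 : v l2 ≤ 1) (hb3 : v l3 ≤ 1)
    (hp12 : v (l1 * l2 - 1) < 1) (hp13 : v (l1 * l3 - 1) < 1) (hp23 : v (l2 * l3 - 1) < 1) :
    v (l1 - 1) < 1 ∧ v (l2 - 1) < 1 ∧ v (l3 - 1) < 1 := by
  let x1 : (v.toValuation hna).valuationSubring := ⟨l1, hb1⟩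
  let x2 : (v.toValuation hna).valuationSubring := ⟨l2, hb2⟩
  let x3 : (v.toValuation hna).valuationSubring := ⟨l3, hb3⟩
  have hrel : (1 - x2) * (1 - x3) + (1 - x1) * (1 - x3) + (1 - x1) * (1 - x2) =
      (1 - x1) * (1 - x2) * (1 - x3) :=
    Subtype.ext (mul_form_of_residue_formula h1 h2 h3 hres)
  obtain ⟨e1, e2, e3⟩ := eq_one_of_pairwise_mul_eq_one_of_residue_formula
    (a := IsLocalRing.residue _ x1) (b := IsLocalRing.residue _ x2) (c := IsLocalRing.residue _ x3)
    (by rw [← map_mul]; exact (v.residue_eq_one_iff hna).mpr hp12)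
    (by rw [← map_mul]; exact (v.residue_eq_one_iff hna).mpr hp13)
    (by rw [← map_mul]; exact (v.residue_eq_one_iff hna).mpr hp23)
    (by simpa using congrArg (IsLocalRing.residue _) hrel)
  exact ⟨(v.residue_eq_one_iff hna).mp e1, (v.residue_eq_one_iff hna).mp e2,
    (v.residue_eq_one_iff hna).mp e3⟩
end

section
/- Let K be a field equipped with a nonarchimedean absolute value |·|, and let λ₁, λ₂, λ₃ ∈ K, each different from 1, satisfy the fixed-point residue formula. Suppose |λ₁| ≤ 1, |λ₂| ≤ 1, |λ₃| = 1, and |λ₁λ₂ − 1| < 1. Then |λ₂ − 1|² ≤ |λ₁λ₂ − 1|. -/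
/-!
Put `a = 1 - λ₁`, `b = 1 - λ₂`, `p = λ₁λ₂ - 1`. Clearing denominators in the residue formula gives
`ab = (1 - λ₃) p`, and hence `a + b = -λ₃ p`. If `|b| ≤ |a|`, then `|b|² ≤ |ab| ≤ |p|`; otherwise the
ultrametric inequality is an equality, `|b| = |a + b| ≤ |p|`, and `|p| < 1` gives `|p|² ≤ |p|`.
-/

theorem one_sub_mul_one_sub_eq_of_residue {K : Type*} [Field K] {l1 l2 l3 : K}
    (h1 : l1 ≠ 1) (h2 : l2 ≠ 1) (h3 : l3 ≠ 1)
    (hres : 1 / (1 - l1) + 1 / (1 - l2) + 1 / (1 - l3) = 1) :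
    (1 - l1) * (1 - l2) = (1 - l3) * (l1 * l2 - 1) := by
  have : (1 : K) - l1 ≠ 0 := sub_ne_zero.mpr h1.symm
  have : (1 : K) - l2 ≠ 0 := sub_ne_zero.mpr h2.symm
  have : (1 : K) - l3 ≠ 0 := sub_ne_zero.mpr h3.symm
  field_simp at hres
  linear_combination hres

namespace IsNonarchimedean

variable {R : Type*} [Ring R] {v : AbsoluteValue R ℝ}

theorem apply_sub_le_max (hna : IsNonarchimedean v) (x y : R) : v (x - y) ≤ max (v x) (v y) := by
  simpa only [sub_eq_add_neg, v.map_neg] using hna x (-y)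

theorem apply_sq_le_of_mul_eq_of_add_eq (hna : IsNonarchimedean v) {a b c u p : R}
    (hmul : a * b = c * p) (hadd : a + b = u * p) (hc : v c ≤ 1) (hu : v u ≤ 1) (hp : v p ≤ 1) :
    v b ^ 2 ≤ v p := by
  rcases le_or_gt (v b) (v a) with hba | hab
  · calc v b ^ 2 = v b * v b := sq _
      _ ≤ v a * v b := by gcongr
      _ = v c * v p := by rw [← map_mul, hmul, map_mul]
      _ ≤ v p := mul_le_of_le_one_left (v.nonneg _) hc
  · have hbp : v b ≤ v p :=
      calc v b = v (a + b) := (hna.add_eq_right_of_lt hab).symm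
        _ = v u * v p := by rw [hadd, map_mul]
        _ ≤ v p := mul_le_of_le_one_left (v.nonneg _) hu
    calc v b ^ 2 ≤ v p ^ 2 := by gcongr
      _ ≤ v p := pow_le_of_le_one (v.nonneg _) hp two_ne_zero

end IsNonarchimedean

theorem stmt_7_general {K : Type*} [Field K] (v : AbsoluteValue K ℝ) (hna : IsNonarchimedean v)
    (l1 l2 l3 : K) (h1 : l1 ≠ 1) (h2 : l2 ≠ 1) (h3 : l3 ≠ 1)
    (hres : 1 / (1 - l1) + 1 / (1 - l2) + 1 / (1 - l3) = 1)
    (hb3 : v l3 = 1)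
    (hp : v (l1 * l2 - 1) < 1) :
    v (l2 - 1) ^ 2 ≤ v (l1 * l2 - 1) := by
  have hmul := one_sub_mul_one_sub_eq_of_residue h1 h2 h3 hres
  have hadd : (1 - l1) + (1 - l2) = -l3 * (l1 * l2 - 1) := by linear_combination hmul
  have hc : v (1 - l3) ≤ 1 := by simpa [hb3] using hna.apply_sub_le_max 1 l3
  rw [v.map_sub]
  exact hna.apply_sq_le_of_mul_eq_of_add_eq hmul hadd hc (by rw [v.map_neg, hb3]) hp.le

/-- If `λ₁, λ₂, λ₃` in a nonarchimedean valued field `K`, each different from `1`,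
satisfy the fixed-point residue formula, with `|λ₁| ≤ 1`, `|λ₂| ≤ 1`, `|λ₃| = 1`, and
`|λ₁λ₂ - 1| < 1`, then `|λ₂ - 1|² ≤ |λ₁λ₂ - 1|`. -/
theorem stmt_7 {K : Type*} [Field K] (v : AbsoluteValue K ℝ) (hna : IsNonarchimedean v)
    (l1 l2 l3 : K) (h1 : l1 ≠ 1) (h2 : l2 ≠ 1) (h3 : l3 ≠ 1)
    (hres : 1 / (1 - l1) + 1 / (1 - l2) + 1 / (1 - l3) = 1)
    (hb1 : v l1 ≤ 1) (hb2 : v l2 ≤ 1) (hb3 : v l3 = 1)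
    (hp : v (l1 * l2 - 1) < 1) :
    v (l2 - 1) ^ 2 ≤ v (l1 * l2 - 1) :=
  stmt_7_general v hna l1 l2 l3 h1 h2 h3 hres hb3 hp
end

section
/- Let K be a field equipped with a nonarchimedean absolute value |·|, and let λ₁, λ₂, λ₃ ∈ K, each different from 1, satisfy the fixed-point residue formula. Suppose |λ₁| ≤ 1, |λ₂| ≤ 1, |λ₃| = 1, and 0 < |λ₁λ₂ − 1| < 1, and let ρ ∈ K satisfy ρ² = λ₁λ₂ − 1. Then |λ₂| = 1, |(λ₁ + λ₂ − 2)/ρ²| = 1, |(λ₁ + λ₂ − 2)/ρ| < 1, and |(λ₂ − 1)/ρ| ≤ 1. (These are the coefficient bounds showing that the conjugate of φ(z) = (z² + λ₁z)/(λ₂z + 1) by γ(z) = ρz − 1, after normalization, has all coefficients in the valuation ring and resultant −1, hence good reduction.) -/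
/-! Clearing denominators, the residue formula reads `λ₁ + λ₂ - 2 = λ₃ (λ₁λ₂ - 1) = λ₃ ρ²`, so
`|λ₁ + λ₂ - 2| = |ρ|²`, which gives the two middle claims; `|λ₂| = 1` holds because `λ₁λ₂` is
close to `1`. For the last claim write `(λ₁ - 1)(λ₂ - 1) = ρ² (1 - λ₃)`: the product has absolute
value at most `|ρ|²`, so one factor is at most `|ρ|`, and since the sum `λ₁ + λ₂ - 2` is also at
most `|ρ|`, the ultrametric inequality bounds the other factor by `|ρ|` as well. -/

theorem residue_formula_iff {K : Type*} [Field K] {a b c : K} (ha : a ≠ 1) (hb : b ≠ 1)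
    (hc : c ≠ 1) :
    1 / (1 - a) + 1 / (1 - b) + 1 / (1 - c) = 1 ↔ a + b - 2 = c * (a * b - 1) := by
  have ha' : 1 - a ≠ 0 := sub_ne_zero.mpr ha.symm
  have hb' : 1 - b ≠ 0 := sub_ne_zero.mpr hb.symm
  have hc' : 1 - c ≠ 0 := sub_ne_zero.mpr hc.symm
  field_simp
  constructor <;> intro h <;> linear_combination -h

namespace AbsoluteValue

variable {R : Type*} [Ring R] (v : AbsoluteValue R ℝ)

theorem eq_one_right_of_mul_eq_one {x y : R} (hx : v x ≤ 1) (hy : v y ≤ 1)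
    (hxy : v (x * y) = 1) : v y = 1 := by
  rw [map_mul] at hxy
  nlinarith [v.nonneg x, v.nonneg y]

theorem le_of_mul_le_sq_of_add_le (hna : IsNonarchimedean v) {x y : R} {r : ℝ} (hr : 0 ≤ r)
    (hmul : v (x * y) ≤ r ^ 2) (hadd : v (x + y) ≤ r) : v y ≤ r := by
  have hmin : min (v x) (v y) ≤ r := by
    by_contra! h
    rw [lt_min_iff] at h
    rw [map_mul] at hmul
    nlinarith [mul_lt_mul'' h.1 h.2 hr hr]
  rcases min_le_iff.mp hmin with hx | hy
  · calc v y = v (x + y + -x) := by simp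
      _ ≤ max (v (x + y)) (v (-x)) := hna _ _
      _ ≤ r := by simpa using ⟨hadd, hx⟩
  · exact hy

variable [Nontrivial R]

theorem eq_one_of_sub_one_lt (hna : IsNonarchimedean v) {x : R} (hx : v (x - 1) < 1) :
    v x = 1 := by
  have h := hna.add_eq_left_of_lt (x := (1 : R)) (y := x - 1) (by rwa [v.map_one])
  rwa [add_sub_cancel, v.map_one] at h

theorem sub_le_one_of_eq_one (hna : IsNonarchimedean v) {x : R} (hx : v x = 1) :
    v (1 - x) ≤ 1 := by
  simpa [sub_eq_add_neg, hx] using hna 1 (-x)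

end AbsoluteValue

/-- With `λ₁, λ₂, λ₃` as in the residue formula, `|λ₁| ≤ 1`, `|λ₂| ≤ 1`,
`|λ₃| = 1`, `0 < |λ₁λ₂ - 1| < 1`, and `ρ² = λ₁λ₂ - 1`, one has `|λ₂| = 1`,
`|(λ₁+λ₂-2)/ρ²| = 1`, `|(λ₁+λ₂-2)/ρ| < 1`, and `|(λ₂-1)/ρ| ≤ 1`. -/
theorem stmt_8 {K : Type*} [Field K] (v : AbsoluteValue K ℝ) (hna : IsNonarchimedean v)
    (l1 l2 l3 ρ : K) (h1 : l1 ≠ 1) (h2 : l2 ≠ 1) (h3 : l3 ≠ 1)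
    (hres : 1 / (1 - l1) + 1 / (1 - l2) + 1 / (1 - l3) = 1)
    (hb1 : v l1 ≤ 1) (hb2 : v l2 ≤ 1) (hb3 : v l3 = 1)
    (hp0 : 0 < v (l1 * l2 - 1)) (hp1 : v (l1 * l2 - 1) < 1)
    (hρ : ρ ^ 2 = l1 * l2 - 1) :
    v l2 = 1 ∧ v ((l1 + l2 - 2) / ρ ^ 2) = 1 ∧ v ((l1 + l2 - 2) / ρ) < 1 ∧
      v ((l2 - 1) / ρ) ≤ 1 := by
  have hvρ : v ρ ^ 2 = v (l1 * l2 - 1) := by rw [← map_pow, hρ]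
  have hρ0 : ρ ≠ 0 := by rintro rfl; simp_all
  have hρ_lt : v ρ < 1 := (pow_lt_one_iff_of_nonneg (v.nonneg ρ) two_ne_zero).mp (hvρ ▸ hp1)
  have key : l1 + l2 - 2 = l3 * ρ ^ 2 := hρ ▸ (residue_formula_iff h1 h2 h3).mp hres
  refine ⟨v.eq_one_right_of_mul_eq_one hb1 hb2 (v.eq_one_of_sub_one_lt hna hp1), ?_, ?_, ?_⟩
  · rw [key, mul_div_cancel_right₀ _ (pow_ne_zero 2 hρ0), hb3]
  · rw [key, pow_two, ← mul_assoc, mul_div_cancel_right₀ _ hρ0, map_mul, hb3, one_mul]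
    exact hρ_lt
  · rw [map_div₀, div_le_one (v.pos hρ0)]
    refine v.le_of_mul_le_sq_of_add_le hna (v.nonneg ρ) (x := l1 - 1) ?_ ?_
    · calc v ((l1 - 1) * (l2 - 1)) = v (l1 * l2 - 1) * v (1 - l3) := by
            rw [← map_mul]; congr 1; linear_combination -key - hρ * l3
        _ ≤ v ρ ^ 2 := by
            rw [← hvρ]
            exact mul_le_of_le_one_right (by positivity) (v.sub_le_one_of_eq_one hna hb3)
    · calc v (l1 - 1 + (l2 - 1)) = v ρ ^ 2 := by
            rw [show l1 - 1 + (l2 - 1) = l1 + l2 - 2 by ring, key, map_mul, hb3, one_mul, map_pow]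
        _ ≤ v ρ := pow_le_of_le_one (v.nonneg ρ) hρ_lt.le two_ne_zero
end

section
/- Let K be a field equipped with a nonarchimedean absolute value |·|, and let λ₁, λ₂, λ₃ ∈ K, each different from 1, satisfy the fixed-point residue formula. Suppose |λ₁| > 1, |λ₂| = 1, and |λ₂ − 1| = 1. Set σ₁ = λ₁ + λ₂ + λ₃ and σ₂ = λ₁λ₂ + λ₁λ₃ + λ₂λ₃. Then |σ₁ − λ₁| < |λ₁|, |σ₂ − λ₁(λ₂ + λ₃)| < |λ₁|, and |λ₂ + λ₃ − 2| = 1. (Hence [σ₁ : σ₂ : 1] specializes to the boundary point [1 : x̃ : 0] of the compactified moduli space, where x̃ = λ̃ + λ̃⁻¹ ≠ 2 for λ̃ the reduction of λ₂; this is the potential multiplicative reduction stratum (W2).) -/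
/-!
Clearing denominators, the residue formula says `λ₁λ₂λ₃ = λ₁ + λ₂ + λ₃ - 2`, which turns into
the identity `(λ₂ + λ₃ - 2)(λ₁λ₂ - 1) = λ₁(λ₂ - 1)²`. Since `|λ₁λ₂| = |λ₁| > 1`, the factor
`λ₁λ₂ - 1` has absolute value `|λ₁|`, as does the right-hand side, so `|λ₂ + λ₃ - 2| = 1`.
Hence `λ₂ + λ₃` and then `λ₃` are integral, which makes `σ₁ - λ₁ = λ₂ + λ₃` and
`σ₂ - λ₁(λ₂ + λ₃) = λ₂λ₃` small compared with `λ₁`.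
-/

theorem mul_mul_eq_add_add_sub_two_of_residue {K : Type*} [Field K] {a b c : K}
    (ha : a ≠ 1) (hb : b ≠ 1) (hc : c ≠ 1)
    (hres : 1 / (1 - a) + 1 / (1 - b) + 1 / (1 - c) = 1) :
    a * b * c = a + b + c - 2 := by
  have ha' : 1 - a ≠ 0 := sub_ne_zero.mpr ha.symm
  have hb' : 1 - b ≠ 0 := sub_ne_zero.mpr hb.symm
  have hc' : 1 - c ≠ 0 := sub_ne_zero.mpr hc.symm
  field_simp at hres
  linear_combination hres

namespace IsNonarchimedean

variable {K : Type*} [Field K] {v : AbsoluteValue K ℝ}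

theorem sub_eq_left_of_lt (hna : IsNonarchimedean v) {x y : K} (h : v y < v x) :
    v (x - y) = v x := by
  rw [sub_eq_add_neg]
  exact hna.add_eq_left_of_lt (by rwa [v.map_neg])

theorem apply_le_one_of_apply_sub_le_one (hna : IsNonarchimedean v) {x y : K}
    (hxy : v (x - y) ≤ 1) (hy : v y ≤ 1) : v x ≤ 1 := by
  simpa using (hna (x - y) y).trans (max_le hxy hy)

theorem apply_add_sub_two_eq_one_of_mul_mul_eq (hna : IsNonarchimedean v) {a b c : K}
    (hrel : a * b * c = a + b + c - 2) (ha : 1 < v a) (hb : v b = 1) (hb₁ : v (b - 1) = 1) :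
    v (b + c - 2) = 1 := by
  have hab : v (a * b - 1) = v a := by
    rw [hna.sub_eq_left_of_lt] <;> simp [hb, ha]
  have key : (b + c - 2) * (a * b - 1) = a * (b - 1) ^ 2 := by linear_combination hrel
  have := congrArg v key
  rw [map_mul, map_mul, map_pow, hab, hb₁, one_pow, mul_one] at this
  exact (mul_eq_right₀ (by positivity)).mp this

end IsNonarchimedean

/-- potential multiplicative reduction stratum (W2): If `λ₁, λ₂, λ₃`, each
different from `1`, satisfy the fixed-point residue formula, with `|λ₁| > 1`, `|λ₂| = 1`, and
`|λ₂ − 1| = 1`, then for `σ₁ = λ₁+λ₂+λ₃` and `σ₂ = λ₁λ₂+λ₁λ₃+λ₂λ₃` one has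
`|σ₁ − λ₁| < |λ₁|`, `|σ₂ − λ₁(λ₂+λ₃)| < |λ₁|`, and `|λ₂ + λ₃ − 2| = 1`. -/
theorem stmt_13 {K : Type*} [Field K] (v : AbsoluteValue K ℝ) (hna : IsNonarchimedean v)
    (l1 l2 l3 : K) (h1 : l1 ≠ 1) (h2 : l2 ≠ 1) (h3 : l3 ≠ 1)
    (hres : 1 / (1 - l1) + 1 / (1 - l2) + 1 / (1 - l3) = 1)
    (hr1 : 1 < v l1) (hr2 : v l2 = 1) (hr2' : v (l2 - 1) = 1)
    (σ₁ σ₂ : K) (hσ₁ : σ₁ = l1 + l2 + l3) (hσ₂ : σ₂ = l1 * l2 + l1 * l3 + l2 * l3) :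
    v (σ₁ - l1) < v l1 ∧ v (σ₂ - l1 * (l2 + l3)) < v l1 ∧ v (l2 + l3 - 2) = 1 := by
  have hrel := mul_mul_eq_add_add_sub_two_of_residue h1 h2 h3 hres
  have hsum₂ : v (l2 + l3 - 2) = 1 := hna.apply_add_sub_two_eq_one_of_mul_mul_eq hrel hr1 hr2 hr2'
  have hsum : v (l2 + l3) ≤ 1 := by
    have htwo : v (2 : K) ≤ 1 := by exact_mod_cast hna.apply_natCast_le_one (n := 2)
    exact hna.apply_le_one_of_apply_sub_le_one hsum₂.le htwo
  have hl3 : v l3 ≤ 1 :=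
    hna.apply_le_one_of_apply_sub_le_one (y := -l2)
      (by simpa [add_comm] using hsum) (by simp [hr2])
  refine ⟨?_, ?_, hsum₂⟩
  · rw [show σ₁ - l1 = l2 + l3 by rw [hσ₁]; ring]
    exact hsum.trans_lt hr1
  · rw [show σ₂ - l1 * (l2 + l3) = l2 * l3 by rw [hσ₂]; ring, map_mul, hr2, one_mul]
    exact hl3.trans_lt hr1
end
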